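/- arXiv:1409.4464 — 3 statements merged into one kernel-verified Lean document; each statement's English description precedes it below -/
import Mathlib

section
/- For every integer λ ≥ 1, the identity w_λ·(z + z^{−1}) = w_{λ+1} + (1−u^λ)·w_{λ−1} holds in the Laurent polynomial ring ℤ[u][z, z^{−1}]. -/
open Polynomial Finset

/-- The Gaussian binomial coefficient `[n; k] ∈ ℤ[u]`, defined as
`∏_{i=1}^{k} (1 − u^{n−i+1})/(1 − u^i)` for `0 ≤ k ≤ n`, and `0` otherwise. -/
noncomputable def gb (n : ℕ) (k : ℤ) : Polynomial ℤ :=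
  if 0 ≤ k ∧ k ≤ (n : ℤ) then
    (∏ i ∈ Finset.Icc 1 k.toNat, ((X : Polynomial ℤ) ^ (n - i + 1) - 1)) /ₘ
      (∏ i ∈ Finset.Icc 1 k.toNat, ((X : Polynomial ℤ) ^ i - 1))
  else 0

/-- `w_λ := Σ_{p=0}^{λ} [λ; p]·z^{λ−2p}` in the Laurent polynomial ring
`ℤ[u][z, z⁻¹]`, the bivariate graded character of the local Weyl module
`W_loc(λ)` for `sl₂[t]`. -/
noncomputable def wloc (l : ℕ) : LaurentPolynomial (Polynomial ℤ) :=
  ∑ p ∈ Finset.range (l + 1),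
    LaurentPolynomial.C (gb l p) * LaurentPolynomial.T ((l : ℤ) - 2 * p)

/-! ### Auxiliary recursive Gaussian binomials -/

/-- Recursive definition of the Gaussian binomial coefficient. -/
noncomputable def g : ℕ → ℕ → Polynomial ℤ
  | _, 0 => 1
  | 0, _+1 => 0
  | n+1, k+1 => g n k + X ^ (k+1) * g n (k+1)

/-- The denominator `∏_{i=1}^k (X^i - 1)`. -/
noncomputable def Dk (k : ℕ) : Polynomial ℤ := ∏ j ∈ Finset.range k, (X ^ (j+1) - 1)

/-- The numerator `∏_{i=1}^k (X^{n+1-i} - 1)`. -/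
noncomputable def Nk (n k : ℕ) : Polynomial ℤ := ∏ j ∈ Finset.range k, (X ^ (n-j) - 1)

lemma Dk_monic (k : ℕ) : (Dk k).Monic :=
  monic_prod_of_monic _ _ fun j _ => by
    simpa using monic_X_pow_sub_C (1:ℤ) (Nat.succ_ne_zero j)

lemma Dk_succ (k : ℕ) : Dk (k+1) = Dk k * (X ^ (k+1) - 1) := Finset.prod_range_succ _ _

lemma Nk_succ (n k : ℕ) : Nk n (k+1) = Nk n k * (X ^ (n-k) - 1) := Finset.prod_range_succ _ _

lemma Nk_succ' (n k : ℕ) : Nk (n+1) (k+1) = Nk n k * (X ^ (n+1) - 1) := by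
  rw [Nk, Finset.prod_range_succ']
  simp [Nk, Nat.succ_sub_succ]

lemma Nk_zero_of_lt {n k : ℕ} (h : n < k) : Nk n k = 0 := by
  apply Finset.prod_eq_zero (Finset.mem_range.mpr h)
  simp

lemma g_zero_of_lt : ∀ n k : ℕ, n < k → g n k = 0
  | _, 0, h => absurd h (by omega)
  | 0, _+1, _ => rfl
  | n+1, k+1, h => by
      rw [g, g_zero_of_lt n k (by omega), g_zero_of_lt n (k+1) (by omega)]
      ring

lemma gD : ∀ n k : ℕ, g n k * Dk k = Nk n k
  | n, 0 => by simp [g, Dk, Nk]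
  | 0, k+1 => by
      rw [g, Nk_succ, Nat.zero_sub]
      simp
  | n+1, k+1 => by
      rw [g, Dk_succ, Nk_succ']
      have h1 := gD n k
      have h2 := gD n (k+1)
      rw [Dk_succ] at h2
      rcases le_or_gt k n with hkn | hkn
      · have hx : (X:Polynomial ℤ) ^ (k+1) * X ^ (n-k) = X ^ (n+1) := by
          rw [← pow_add]; congr 1; omega
        have h3 := Nk_succ n k
        linear_combination (X^(k+1)-1) * h1 + X^(k+1) * h2 + X^(k+1) * h3
          + Nk n k * hx
      · rw [Nk_zero_of_lt hkn] at h1 ⊢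
        rw [Nk_zero_of_lt (by omega : n < k+1)] at h2
        rw [g_zero_of_lt n k hkn, g_zero_of_lt n (k+1) (by omega)]
        ring

lemma prod_den_eq : ∀ k : ℕ,
    (∏ i ∈ Finset.Icc 1 k, ((X : Polynomial ℤ) ^ i - 1)) = Dk k
  | 0 => by simp [Dk]
  | k+1 => by
      rw [Finset.prod_Icc_succ_top (by omega : 1 ≤ k+1), prod_den_eq k, Dk_succ]

lemma prod_num_eq : ∀ n k : ℕ, k ≤ n →
    (∏ i ∈ Finset.Icc 1 k, ((X : Polynomial ℤ) ^ (n - i + 1) - 1)) = Nk n k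
  | n, 0, _ => by simp [Nk]
  | n, k+1, h => by
      rw [Finset.prod_Icc_succ_top (by omega : 1 ≤ k+1), prod_num_eq n k (by omega),
        show n - (k+1) + 1 = n - k from by omega, Nk_succ]

lemma gb_eq (n p : ℕ) : gb n (p : ℤ) = g n p := by
  rcases le_or_gt p n with hp | hp
  · rw [gb, if_pos ⟨Int.natCast_nonneg p, by exact_mod_cast hp⟩, Int.toNat_natCast,
      prod_num_eq n p hp, prod_den_eq p, ← gD n p, mul_comm,
      mul_divByMonic_cancel_left _ (Dk_monic p)]
  · rw [gb, if_neg, g_zero_of_lt n p hp]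
    rintro ⟨-, h2⟩
    exact absurd (by exact_mod_cast h2) (not_le.mpr hp)

/-- The key identity at the level of numerators. -/
lemma nkey (m p : ℕ) :
    Nk (m+1) (p+1) + Nk (m+1) p * (X^(p+1) - 1)
      = Nk (m+2) (p+1) + (1 - X^(m+1)) * (Nk m p * (X^(p+1) - 1)) := by
  have h2 : Nk (m+1) (p+1) = Nk m p * (X^(m+1) - 1) := Nk_succ' m p
  have h4 : Nk (m+2) (p+1) = Nk (m+1) p * (X^(m+1+1) - 1) := Nk_succ' (m+1) p
  rcases le_or_gt p (m+1) with h | h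
  · obtain ⟨q, hq⟩ : ∃ q, m + 1 = p + q := ⟨m+1-p, by omega⟩
    have h1 : Nk (m+1) (p+1) = Nk (m+1) p * (X^q - 1) := by
      rw [Nk_succ, show m + 1 - p = q from by omega]
    have h3 : Nk (m+1) p * ((X:Polynomial ℤ)^q - 1) = Nk m p * (X^(p+q) - 1) := by
      rw [← h1, h2, hq]
    rw [h2, h4, hq] ; rw [hq] at h3
    linear_combination (-(X:Polynomial ℤ)^(p+1)) * h3
  · rw [h2, h4, Nk_zero_of_lt (by omega : m < p), Nk_zero_of_lt (by omega : m+1 < p)]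
    ring

/-- The key Pascal-type identity for `g`. -/
lemma keyg (m p : ℕ) :
    g (m+1) (p+1) + g (m+1) p = g (m+2) (p+1) + (1 - X^(m+1)) * g m p := by
  apply mul_right_cancel₀ (Dk_monic (p+1)).ne_zero
  have e1 := gD (m+1) (p+1)
  have e2 := gD (m+1) p
  have e3 := gD (m+2) (p+1)
  have e4 := gD m p
  have hdd := Dk_succ p
  have nk := nkey m p
  linear_combination e1 - e3 + nk + (X^(p+1)-1) * e2 - (1-X^(m+1))*(X^(p+1)-1) * e4
    + (g (m+1) p - (1 - X^(m+1)) * g m p) * hdd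

/-- Shifted coefficients, for `w_λ · T(−1)`. -/
noncomputable def gsh (m : ℕ) : ℕ → Polynomial ℤ
  | 0 => 0
  | p+1 => g (m+1) p

/-- Shifted coefficients, for `(1 − X^λ)·w_{λ−1}`. -/
noncomputable def hsh (m : ℕ) : ℕ → Polynomial ℤ
  | 0 => 0
  | p+1 => (1 - X^(m+1)) * g m p

lemma wloc_eq (l : ℕ) : wloc l = ∑ p ∈ Finset.range (l + 1),
    LaurentPolynomial.C (g l p) * LaurentPolynomial.T ((l : ℤ) - 2 * p) :=
  Finset.sum_congr rfl fun p _ => by rw [gb_eq]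

/-- For every integer `λ ≥ 1`, the identity
`w_λ·(z + z⁻¹) = w_{λ+1} + (1 − u^λ)·w_{λ−1}` holds in `ℤ[u][z, z⁻¹]`. -/
theorem stmt_1 (lam : ℕ) (hlam : 1 ≤ lam) :
    wloc lam * (LaurentPolynomial.T 1 + LaurentPolynomial.T (-1)) =
      wloc (lam + 1) +
        LaurentPolynomial.C (1 - (X : Polynomial ℤ) ^ lam) * wloc (lam - 1) := by
  obtain ⟨m, rfl⟩ : ∃ m, lam = m + 1 := ⟨lam - 1, by omega⟩
  rw [wloc_eq, wloc_eq, wloc_eq, Nat.add_sub_cancel]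
  have step1 : (∑ p ∈ Finset.range (m+2),
      LaurentPolynomial.C (g (m+1) p) * LaurentPolynomial.T (((m+1:ℕ):ℤ) - 2*p)) *
        LaurentPolynomial.T 1
      = ∑ p ∈ Finset.range (m+3),
          LaurentPolynomial.C (g (m+1) p) * LaurentPolynomial.T ((m:ℤ) + 2 - 2*p) := by
    rw [Finset.sum_mul]
    conv_rhs => rw [show m+3 = (m+2)+1 from rfl, Finset.sum_range_succ]
    rw [g_zero_of_lt (m+1) (m+2) (by omega)]
    simp only [map_zero, zero_mul, add_zero]
    refine Finset.sum_congr rfl fun p _ => ?_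
    rw [mul_assoc, ← LaurentPolynomial.T_add]
    congr 1
    push_cast
    ring
  have step2 : (∑ p ∈ Finset.range (m+2),
      LaurentPolynomial.C (g (m+1) p) * LaurentPolynomial.T (((m+1:ℕ):ℤ) - 2*p)) *
        LaurentPolynomial.T (-1)
      = ∑ p ∈ Finset.range (m+3),
          LaurentPolynomial.C (gsh m p) * LaurentPolynomial.T ((m:ℤ) + 2 - 2*p) := by
    conv_rhs => rw [show m+3 = (m+2)+1 from rfl, Finset.sum_range_succ'
      (fun p => LaurentPolynomial.C (gsh m p) * LaurentPolynomial.T ((m:ℤ) + 2 - 2*(p:ℕ)))]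
    simp only [gsh, map_zero, zero_mul, add_zero, Finset.sum_mul]
    refine Finset.sum_congr rfl fun p _ => ?_
    rw [mul_assoc, ← LaurentPolynomial.T_add]
    congr 1
    push_cast
    ring
  have step3 : (∑ p ∈ Finset.range (m+1+1+1),
      LaurentPolynomial.C (g (m+1+1) p) * LaurentPolynomial.T (((m+1+1:ℕ):ℤ) - 2*p))
      = ∑ p ∈ Finset.range (m+3),
          LaurentPolynomial.C (g (m+2) p) * LaurentPolynomial.T ((m:ℤ) + 2 - 2*p) := by
    refine Finset.sum_congr rfl fun p _ => ?_
    rw [show ((m+1+1:ℕ):ℤ) = (m:ℤ)+2 from by push_cast; ring]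
  have step4 : LaurentPolynomial.C (1 - (X:Polynomial ℤ)^(m+1)) *
      (∑ p ∈ Finset.range (m+1),
        LaurentPolynomial.C (g m p) * LaurentPolynomial.T ((m:ℤ) - 2*p))
      = ∑ p ∈ Finset.range (m+3),
          LaurentPolynomial.C (hsh m p) * LaurentPolynomial.T ((m:ℤ) + 2 - 2*p) := by
    conv_rhs => rw [show m+3 = (m+2)+1 from rfl, Finset.sum_range_succ,
      show m+2 = (m+1)+1 from rfl, Finset.sum_range_succ'
      (fun p => LaurentPolynomial.C (hsh m p) * LaurentPolynomial.T ((m:ℤ) + 2 - 2*(p:ℕ)))]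
    simp only [hsh, g_zero_of_lt m (m+1) (by omega), mul_zero, map_zero, zero_mul,
      add_zero, Finset.mul_sum]
    refine Finset.sum_congr rfl fun p _ => ?_
    rw [← mul_assoc, ← map_mul]
    congr 2
    push_cast
    ring
  rw [mul_add, step1, step2, step3, step4, ← Finset.sum_add_distrib,
    ← Finset.sum_add_distrib]
  refine Finset.sum_congr rfl fun p _ => ?_
  rw [← add_mul, ← add_mul, ← map_add, ← map_add]
  congr 2
  cases p with
  | zero => simp [gsh, hsh, g]
  | succ q => simpa [gsh, hsh] using keyg m q
end

section
/- For all integers λ ≥ 1 and s ≥ 1, the identity b_{λ+1}(s) + (1 − u^{−λ})·b_{λ−1}(s−1) = b_λ(s) + (1 − u^{λ−2s+2})·b_λ(s−1) holds in the field of rational functions ℚ(u); moreover b₀(0) = b₁(0) = 1 and b_λ(s) = 0 whenever 2s > λ. -/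
open Finset

/-- `(1:u)_n := ∏_{i=1}^{n} (1 − u^i)⁻¹` in `ℚ(u)`. -/
noncomputable def poch (n : ℕ) : RatFunc ℚ :=
  ∏ i ∈ Finset.Icc 1 n, (1 - RatFunc.X ^ i)⁻¹

/-- `b_λ(s) := u^{s(s−λ)}·(1:u)_s·(1:u)_{λ−2s}·(1:u)_λ⁻¹ ∈ ℚ(u)` if `2s ≤ λ`,
and `b_λ(s) := 0` if `2s > λ`. -/
noncomputable def bcoef (l s : ℕ) : RatFunc ℚ :=
  if 2 * s ≤ l then
    RatFunc.X ^ ((s : ℤ) * ((s : ℤ) - l)) * poch s * poch (l - 2 * s) * (poch l)⁻¹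
  else 0

lemma one_sub_X_pow_ne_zero {k : ℕ} (hk : 1 ≤ k) : (1 : RatFunc ℚ) - RatFunc.X ^ k ≠ 0 := by
  have h : ((1 : Polynomial ℚ) - Polynomial.X ^ k) ≠ 0 := by
    intro h
    have := congrArg (Polynomial.eval 0) h
    simp [Polynomial.eval_pow, zero_pow (by omega : k ≠ 0)] at this
  have := (map_ne_zero_iff (algebraMap (Polynomial ℚ) (RatFunc ℚ))
    (RatFunc.algebraMap_injective ℚ)).mpr h
  simpa [RatFunc.algebraMap_X, map_sub, map_pow] using this

lemma poch_ne_zero (n : ℕ) : poch n ≠ 0 := by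
  unfold poch
  refine Finset.prod_ne_zero_iff.mpr ?_
  intro i hi
  simp only [mem_Icc] at hi
  exact inv_ne_zero (one_sub_X_pow_ne_zero hi.1)

lemma poch_succ (n : ℕ) : poch (n+1) = poch n * (1 - RatFunc.X ^ (n+1))⁻¹ := by
  unfold poch
  rw [Finset.prod_Icc_succ_top (by omega)]

lemma poch_zero : poch 0 = 1 := by simp [poch]

lemma zp (e : ℤ) (N : ℕ) (h : e = -(N:ℤ)) : (RatFunc.X : RatFunc ℚ) ^ e = (RatFunc.X ^ N)⁻¹ := by
  rw [h, zpow_neg, zpow_natCast]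

lemma zp2 (e : ℤ) (N k : ℕ) (h : e = -(((N:ℤ))+(k:ℤ))) :
    (RatFunc.X : RatFunc ℚ) ^ e = (RatFunc.X ^ N * RatFunc.X ^ k)⁻¹ := by
  rw [← pow_add]; exact zp _ _ (by push_cast at h ⊢; omega)

lemma bcoef_main (σ m : ℕ) :
    bcoef (2*σ+2+m + 1) (σ+1) + (1 - RatFunc.X ^ (-((2*σ+2+m : ℕ) : ℤ))) * bcoef (2*σ+2+m - 1) (σ+1-1) =
      bcoef (2*σ+2+m) (σ+1) + (1 - RatFunc.X ^ (((2*σ+2+m:ℕ) : ℤ) - 2 * (σ+1:ℕ) + 2)) * bcoef (2*σ+2+m) (σ+1-1) := by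
      have hX : (RatFunc.X : RatFunc ℚ) ≠ 0 := RatFunc.X_ne_zero
      have hc : ∀ k : ℕ, (RatFunc.X : RatFunc ℚ)^k * (RatFunc.X^k)⁻¹ = 1 :=
        fun k => mul_inv_cancel₀ (pow_ne_zero _ hX)
      obtain ⟨Y, hXN, hY⟩ : ∃ Y, Y ≠ 0 ∧ (RatFunc.X : RatFunc ℚ) ^ (σ*(σ+m+1)) = Y :=
        ⟨_, pow_ne_zero _ hX, rfl⟩
      obtain ⟨A, h1, hA⟩ : ∃ A, A ≠ 0 ∧ 1 - (RatFunc.X : RatFunc ℚ) ^ (σ+1) = A :=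
        ⟨_, one_sub_X_pow_ne_zero (by omega), rfl⟩
      obtain ⟨B, h2, hB⟩ : ∃ B, B ≠ 0 ∧ 1 - (RatFunc.X : RatFunc ℚ) ^ (m+1) = B :=
        ⟨_, one_sub_X_pow_ne_zero (by omega), rfl⟩
      obtain ⟨B', h3, hB'⟩ : ∃ B', B' ≠ 0 ∧ 1 - (RatFunc.X : RatFunc ℚ) ^ (m+1+1) = B' :=
        ⟨_, one_sub_X_pow_ne_zero (by omega), rfl⟩
      obtain ⟨C, h4, hC⟩ : ∃ C, C ≠ 0 ∧ 1 - (RatFunc.X : RatFunc ℚ) ^ (2*σ+1+m+1) = C :=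
        ⟨_, one_sub_X_pow_ne_zero (by omega), rfl⟩
      obtain ⟨C', h5, hC'⟩ : ∃ C', C' ≠ 0 ∧ 1 - (RatFunc.X : RatFunc ℚ) ^ (2*σ+1+m+1+1) = C' :=
        ⟨_, one_sub_X_pow_ne_zero (by omega), rfl⟩
      obtain ⟨Q, hq, hQ⟩ : ∃ Q, Q ≠ 0 ∧ poch (2*σ+1+m) = Q := ⟨_, poch_ne_zero _, rfl⟩
      obtain ⟨S, hs, hS⟩ : ∃ S, S ≠ 0 ∧ poch σ = S := ⟨_, poch_ne_zero _, rfl⟩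
      obtain ⟨M, hm, hM⟩ : ∃ M, M ≠ 0 ∧ poch m = M := ⟨_, poch_ne_zero _, rfl⟩
      have hAi : A⁻¹ * A = 1 := inv_mul_cancel₀ h1
      have hBi : B⁻¹ * B = 1 := inv_mul_cancel₀ h2
      have hB'i : B' * B'⁻¹ = 1 := mul_inv_cancel₀ h3
      have t1 : bcoef (2*σ+2+m+1) (σ+1)
          = Y⁻¹ * (RatFunc.X^(2*σ+1+m+1))⁻¹ * S * M * Q⁻¹ * A⁻¹ * B⁻¹ * (C * C') := by
        have z : (RatFunc.X : RatFunc ℚ) ^ (((σ+1:ℕ):ℤ) * (((σ+1:ℕ):ℤ) - ((2*σ+2+m+1:ℕ):ℤ)))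
            = (Y * RatFunc.X^(2*σ+1+m+1))⁻¹ := by rw [← hY]; exact zp2 _ _ _ (by push_cast; ring)
        rw [bcoef, if_pos (by omega), z,
          show 2*σ+2+m+1 - 2*(σ+1) = m+1 from by omega,
          show (2*σ+2+m+1 : ℕ) = 2*σ+1+m+1+1 from by omega,
          poch_succ, poch_succ, poch_succ, poch_succ, hQ, hS, hM, hA, hB, hC, hC']
        simp only [mul_inv, inv_inv]
        ring
      have t2 : (1 - RatFunc.X ^ (-((2*σ+2+m : ℕ) : ℤ))) * bcoef (2*σ+2+m-1) (σ+1-1)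
          = Y⁻¹ * (RatFunc.X^(2*σ+1+m+1))⁻¹ * S * M * Q⁻¹ * A⁻¹ * B⁻¹
            * ((RatFunc.X^(2*σ+1+m+1) - 1) * A) := by
        have z : (RatFunc.X : RatFunc ℚ) ^ (((σ:ℕ):ℤ) * (((σ:ℕ):ℤ) - ((2*σ+1+m:ℕ):ℤ)))
            = Y⁻¹ := by rw [← hY]; exact zp _ _ (by push_cast; ring)
        have z' : (RatFunc.X : RatFunc ℚ) ^ (-((2*σ+2+m : ℕ) : ℤ))
            = (RatFunc.X^(2*σ+1+m+1))⁻¹ := zp _ _ (by push_cast; ring)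
        rw [show σ+1-1 = σ from rfl, show 2*σ+2+m-1 = 2*σ+1+m from by omega,
          bcoef, if_pos (by omega), show 2*σ+1+m - 2*σ = m+1 from by omega,
          z, z', poch_succ, hQ, hS, hM, hB]
        linear_combination (-(Y⁻¹*S*M*B⁻¹*Q⁻¹)) * hc (2*σ+1+m+1)
          + (-(Y⁻¹*S*M*B⁻¹*Q⁻¹*(RatFunc.X^(2*σ+1+m+1))⁻¹*(RatFunc.X^(2*σ+1+m+1) - 1))) * hAi
      have t3 : bcoef (2*σ+2+m) (σ+1)
          = Y⁻¹ * (RatFunc.X^(2*σ+1+m+1))⁻¹ * S * M * Q⁻¹ * A⁻¹ * B⁻¹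
            * (RatFunc.X^(σ+1) * B * C) := by
        have z : (RatFunc.X : RatFunc ℚ) ^ (((σ+1:ℕ):ℤ) * (((σ+1:ℕ):ℤ) - ((2*σ+2+m:ℕ):ℤ)))
            = (Y * RatFunc.X^(σ+m+1))⁻¹ := by rw [← hY]; exact zp2 _ _ _ (by push_cast; ring)
        rw [bcoef, if_pos (by omega), z, show 2*σ+2+m - 2*(σ+1) = m from by omega,
          show (2*σ+2+m : ℕ) = 2*σ+1+m+1 from by omega,
          poch_succ, poch_succ, hQ, hS, hM, hA, hC]
        simp only [mul_inv, inv_inv]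
        linear_combination (-(Y⁻¹*S*M*A⁻¹*Q⁻¹*C*(RatFunc.X^(σ+m+1))⁻¹)) * hc (2*σ+1+m+1)
          + (Y⁻¹*S*M*A⁻¹*Q⁻¹*C*(RatFunc.X^(2*σ+1+m+1))⁻¹*RatFunc.X^(σ+1)) * hc (σ+m+1)
          + (-(Y⁻¹*S*M*A⁻¹*Q⁻¹*C*(RatFunc.X^(2*σ+1+m+1))⁻¹*RatFunc.X^(σ+1))) * hBi
      have t4 : (1 - RatFunc.X ^ (((2*σ+2+m:ℕ) : ℤ) - 2 * (σ+1:ℕ) + 2)) * bcoef (2*σ+2+m) (σ+1-1)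
          = Y⁻¹ * (RatFunc.X^(2*σ+1+m+1))⁻¹ * S * M * Q⁻¹ * A⁻¹ * B⁻¹
            * (RatFunc.X^(σ+m+2) * A * C) := by
        have z : (RatFunc.X : RatFunc ℚ) ^ (((σ:ℕ):ℤ) * (((σ:ℕ):ℤ) - ((2*σ+2+m:ℕ):ℤ)))
            = (Y * RatFunc.X^(σ))⁻¹ := by rw [← hY]; exact zp2 _ _ _ (by push_cast; ring)
        have z' : (RatFunc.X : RatFunc ℚ) ^ (((2*σ+2+m:ℕ) : ℤ) - 2 * (σ+1:ℕ) + 2)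
            = RatFunc.X ^ (m+1+1) := by
          rw [show (((2*σ+2+m:ℕ) : ℤ) - 2 * (σ+1:ℕ) + 2) = ((m+1+1 : ℕ) : ℤ) from by push_cast; ring,
            zpow_natCast]
        rw [show σ+1-1 = σ from rfl, bcoef, if_pos (by omega),
          show 2*σ+2+m - 2*σ = m+1+1 from by omega, z, z',
          show (2*σ+2+m : ℕ) = 2*σ+1+m+1 from by omega,
          poch_succ, poch_succ, poch_succ, hQ, hS, hM, hB, hB', hC]
        simp only [mul_inv, inv_inv]
        linear_combination (-(Y⁻¹*S*M*B⁻¹*Q⁻¹*C*(RatFunc.X^σ)⁻¹)) * hc (2*σ+1+m+1)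
          + (Y⁻¹*S*M*B⁻¹*Q⁻¹*C*(RatFunc.X^(2*σ+1+m+1))⁻¹*RatFunc.X^(σ+m+2)) * hc σ
          + (Y⁻¹*S*M*B⁻¹*Q⁻¹*C*(RatFunc.X^σ)⁻¹) * hB'i
          + (-(Y⁻¹*S*M*B⁻¹*Q⁻¹*C*(RatFunc.X^(2*σ+1+m+1))⁻¹*RatFunc.X^(σ+m+2))) * hAi
      rw [t1, t2, t3, t4, ← hA, ← hB, ← hC, ← hC']
      ring

lemma bcoef_odd (σ : ℕ) :
    bcoef (2*σ+1 + 1) (σ+1) + (1 - RatFunc.X ^ (-((2*σ+1 : ℕ) : ℤ))) * bcoef (2*σ+1 - 1) (σ+1-1) =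
      bcoef (2*σ+1) (σ+1) + (1 - RatFunc.X ^ (((2*σ+1:ℕ) : ℤ) - 2 * (σ+1:ℕ) + 2)) * bcoef (2*σ+1) (σ+1-1) := by
      have hX : (RatFunc.X : RatFunc ℚ) ≠ 0 := RatFunc.X_ne_zero
      have hc : ∀ k : ℕ, (RatFunc.X : RatFunc ℚ)^k * (RatFunc.X^k)⁻¹ = 1 :=
        fun k => mul_inv_cancel₀ (pow_ne_zero _ hX)
      obtain ⟨Y, hXN, hY⟩ : ∃ Y, Y ≠ 0 ∧ (RatFunc.X : RatFunc ℚ) ^ (σ*σ) = Y :=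
        ⟨_, pow_ne_zero _ hX, rfl⟩
      obtain ⟨A, h1, hA⟩ : ∃ A, A ≠ 0 ∧ 1 - (RatFunc.X : RatFunc ℚ) ^ (σ+1) = A :=
        ⟨_, one_sub_X_pow_ne_zero (by omega), rfl⟩
      obtain ⟨E, h2, hE⟩ : ∃ E, E ≠ 0 ∧ 1 - (RatFunc.X : RatFunc ℚ) ^ (0+1) = E :=
        ⟨_, one_sub_X_pow_ne_zero (by omega), rfl⟩
      obtain ⟨C, h4, hC⟩ : ∃ C, C ≠ 0 ∧ 1 - (RatFunc.X : RatFunc ℚ) ^ (2*σ+1) = C :=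
        ⟨_, one_sub_X_pow_ne_zero (by omega), rfl⟩
      obtain ⟨C', h5, hC'⟩ : ∃ C', C' ≠ 0 ∧ 1 - (RatFunc.X : RatFunc ℚ) ^ (2*σ+1+1) = C' :=
        ⟨_, one_sub_X_pow_ne_zero (by omega), rfl⟩
      obtain ⟨Q, hq, hQ⟩ : ∃ Q, Q ≠ 0 ∧ poch (2*σ) = Q := ⟨_, poch_ne_zero _, rfl⟩
      obtain ⟨S, hs, hS⟩ : ∃ S, S ≠ 0 ∧ poch σ = S := ⟨_, poch_ne_zero _, rfl⟩
      have hAi : A⁻¹ * A = 1 := inv_mul_cancel₀ h1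
      have hEi : E * E⁻¹ = 1 := mul_inv_cancel₀ h2
      have t1 : bcoef (2*σ+1+1) (σ+1)
          = Y⁻¹ * (RatFunc.X^(2*σ+1))⁻¹ * S * Q⁻¹ * A⁻¹ * (C * C') := by
        have z : (RatFunc.X : RatFunc ℚ) ^ (((σ+1:ℕ):ℤ) * (((σ+1:ℕ):ℤ) - ((2*σ+1+1:ℕ):ℤ)))
            = (Y * RatFunc.X^(2*σ+1))⁻¹ := by rw [← hY]; exact zp2 _ _ _ (by push_cast; ring)
        rw [bcoef, if_pos (by omega), z,
          show 2*σ+1+1 - 2*(σ+1) = 0 from by omega, poch_zero,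
          poch_succ, poch_succ, poch_succ, hQ, hS, hA, hC, hC']
        simp only [mul_inv, inv_inv]
        ring
      have t2 : (1 - RatFunc.X ^ (-((2*σ+1 : ℕ) : ℤ))) * bcoef (2*σ+1-1) (σ+1-1)
          = Y⁻¹ * (RatFunc.X^(2*σ+1))⁻¹ * S * Q⁻¹ * A⁻¹
            * ((RatFunc.X^(2*σ+1) - 1) * A) := by
        have z : (RatFunc.X : RatFunc ℚ) ^ (((σ:ℕ):ℤ) * (((σ:ℕ):ℤ) - ((2*σ:ℕ):ℤ)))
            = Y⁻¹ := by rw [← hY]; exact zp _ _ (by push_cast; ring)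
        have z' : (RatFunc.X : RatFunc ℚ) ^ (-((2*σ+1 : ℕ) : ℤ))
            = (RatFunc.X^(2*σ+1))⁻¹ := zp _ _ (by push_cast; ring)
        rw [show σ+1-1 = σ from rfl, show 2*σ+1-1 = 2*σ from by omega,
          bcoef, if_pos (by omega), show 2*σ - 2*σ = 0 from by omega, poch_zero,
          z, z', hQ, hS]
        linear_combination (-(Y⁻¹*S*Q⁻¹)) * hc (2*σ+1)
          + (-(Y⁻¹*S*Q⁻¹*(RatFunc.X^(2*σ+1))⁻¹*(RatFunc.X^(2*σ+1) - 1))) * hAi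
      have t3 : bcoef (2*σ+1) (σ+1) = 0 := by rw [bcoef, if_neg (by omega)]
      have t4 : (1 - RatFunc.X ^ (((2*σ+1:ℕ) : ℤ) - 2 * (σ+1:ℕ) + 2)) * bcoef (2*σ+1) (σ+1-1)
          = Y⁻¹ * (RatFunc.X^(2*σ+1))⁻¹ * S * Q⁻¹ * A⁻¹
            * (RatFunc.X^(σ+1) * A * C) := by
        have z : (RatFunc.X : RatFunc ℚ) ^ (((σ:ℕ):ℤ) * (((σ:ℕ):ℤ) - ((2*σ+1:ℕ):ℤ)))
            = (Y * RatFunc.X^(σ))⁻¹ := by rw [← hY]; exact zp2 _ _ _ (by push_cast; ring)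
        have z' : (RatFunc.X : RatFunc ℚ) ^ (((2*σ+1:ℕ) : ℤ) - 2 * (σ+1:ℕ) + 2)
            = RatFunc.X ^ (0+1) := by
          rw [show (((2*σ+1:ℕ) : ℤ) - 2 * (σ+1:ℕ) + 2) = ((0+1 : ℕ) : ℤ) from by push_cast; ring,
            zpow_natCast]
        rw [show σ+1-1 = σ from rfl, bcoef, if_pos (by omega),
          show 2*σ+1 - 2*σ = 0+1 from by omega, z, z',
          poch_succ, poch_succ, poch_zero, hQ, hS, hE, hC]
        simp only [mul_inv, inv_inv]
        linear_combination (-(Y⁻¹*S*Q⁻¹*C*(RatFunc.X^σ)⁻¹)) * hc (2*σ+1)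
          + (Y⁻¹*S*Q⁻¹*C*(RatFunc.X^(2*σ+1))⁻¹*RatFunc.X^(σ+1)) * hc σ
          + (Y⁻¹*S*Q⁻¹*C*(RatFunc.X^σ)⁻¹) * hEi
          + (-(Y⁻¹*S*Q⁻¹*C*(RatFunc.X^(2*σ+1))⁻¹*RatFunc.X^(σ+1))) * hAi
      rw [t1, t2, t3, t4, ← hA, ← hC, ← hC']
      ring

/-- For all integers `λ ≥ 1` and `s ≥ 1`, the identity
`b_{λ+1}(s) + (1 − u^{−λ})·b_{λ−1}(s−1) = b_λ(s) + (1 − u^{λ−2s+2})·b_λ(s−1)`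
holds in `ℚ(u)`; moreover `b₀(0) = b₁(0) = 1` and `b_λ(s) = 0` whenever `2s > λ`. -/
theorem stmt_5 :
    (∀ lam s : ℕ, 1 ≤ lam → 1 ≤ s →
        bcoef (lam + 1) s + (1 - RatFunc.X ^ (-(lam : ℤ))) * bcoef (lam - 1) (s - 1) =
          bcoef lam s + (1 - RatFunc.X ^ ((lam : ℤ) - 2 * s + 2)) * bcoef lam (s - 1)) ∧
      bcoef 0 0 = 1 ∧ bcoef 1 0 = 1 ∧
      (∀ lam s : ℕ, lam < 2 * s → bcoef lam s = 0) := by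
  refine ⟨?_, ?_, ?_, ?_⟩
  · intro lam s hl hs
    obtain ⟨σ, rfl⟩ : ∃ σ, s = σ + 1 := ⟨s - 1, by omega⟩
    rcases lt_or_ge lam (2*σ) with h | h
    · simp only [bcoef]
      rw [if_neg (show ¬(2*(σ+1) ≤ lam+1) from by omega),
        if_neg (show ¬(2*(σ+1-1) ≤ lam-1) from by omega),
        if_neg (show ¬(2*(σ+1) ≤ lam) from by omega),
        if_neg (show ¬(2*(σ+1-1) ≤ lam) from by omega)]
      ring
    · rcases lt_or_ge lam (2*σ+2) with h2 | h2
      · rcases (show lam = 2*σ ∨ lam = 2*σ+1 from by omega) with rfl | rfl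
        · rw [show (((2*σ:ℕ) : ℤ) - 2 * ((σ+1:ℕ)) + 2) = 0 from by push_cast; ring, zpow_zero]
          simp only [bcoef]
          rw [if_neg (show ¬(2*(σ+1) ≤ 2*σ+1) from by omega),
            if_neg (show ¬(2*(σ+1-1) ≤ 2*σ-1) from by omega),
            if_neg (show ¬(2*(σ+1) ≤ 2*σ) from by omega)]
          ring
        · exact bcoef_odd σ
      · obtain ⟨m, rfl⟩ : ∃ m, lam = 2*σ+2+m := ⟨lam - (2*σ+2), by omega⟩
        exact bcoef_main σ m
  · rw [bcoef, if_pos (by omega)]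
    norm_num [poch_zero]
  · rw [bcoef, if_pos (by omega)]
    norm_num [poch_zero, mul_inv_cancel₀ (poch_ne_zero 1)]
  · intro lam s h
    rw [bcoef, if_neg (by omega)]
end

section
/- For all integers λ ≥ 0 and s with 0 ≤ s ≤ λ, the identity u^{s(s−λ)}·[λ; s] = Σ_{k=0}^{⌊λ/2⌋} b_λ(k)·[λ−2k; s−k] holds in the field of rational functions ℚ(u). -/
/-!
With `m = λ - s`, dividing the `k`-th summand by the left-hand side leaves
`u^{(s-k)(m-k)} [s;k] [m;k] (u;u)_k`, so the identity amounts to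
`∑_k q^{(s-k)(m-k)} [s;k]_q [m;k]_q (q;q)_k = 1`. This holds in every commutative ring, with
`[n;k]_q` defined by the `q`-Pascal recursion: in the induction on `s`, the second Pascal rule
turns the sum for `s + 1` into the sum for `s` plus a telescoping sum. The recursion also shows
that `(q;q)_k` divides `∏_{i=1}^{k} (1 - q^{n-i+1})` in `ℤ[X]`, which identifies `[n;k]_q` with
the division-by-monic definition of `gb`.
-/

open Polynomial Finset

/-- The canonical embedding `ℤ[u] → ℚ(u)`. -/
noncomputable def iQ : Polynomial ℤ →+* RatFunc ℚ :=
  (algebraMap (Polynomial ℚ) (RatFunc ℚ)).comp (Polynomial.mapRingHom (Int.castRingHom ℚ))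

section CommRing

variable {R : Type*} [CommRing R] (q : R)

def qFactorial (n : ℕ) : R := ∏ i ∈ Icc 1 n, (1 - q ^ i)

@[simp]
theorem qFactorial_zero : qFactorial q 0 = 1 := by
  simp [qFactorial]

theorem qFactorial_succ (n : ℕ) : qFactorial q (n + 1) = qFactorial q n * (1 - q ^ (n + 1)) :=
  prod_Icc_succ_top (by omega) _

def qBinomial : ℕ → ℕ → R
  | _, 0 => 1
  | 0, _ + 1 => 0
  | n + 1, k + 1 => qBinomial n k + q ^ (k + 1) * qBinomial n (k + 1)

@[simp]
theorem qBinomial_zero_right (n : ℕ) : qBinomial q n 0 = 1 := by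
  cases n <;> rfl

theorem qBinomial_succ_succ (n k : ℕ) :
    qBinomial q (n + 1) (k + 1) = qBinomial q n k + q ^ (k + 1) * qBinomial q n (k + 1) :=
  rfl

theorem qBinomial_of_lt {n k : ℕ} (h : n < k) : qBinomial q n k = 0 := by
  induction n generalizing k with
  | zero => obtain ⟨k, rfl⟩ := Nat.exists_eq_add_of_lt h; rfl
  | succ n ih =>
    obtain ⟨k, rfl⟩ := Nat.exists_eq_add_of_lt (Nat.zero_lt_of_lt h)
    rw [qBinomial_succ_succ, ih (by omega), ih (by omega), mul_zero, add_zero]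

theorem map_qBinomial {S : Type*} [CommRing S] (f : R →+* S) (n k : ℕ) :
    f (qBinomial q n k) = qBinomial (f q) n k := by
  induction n generalizing k with
  | zero => cases k <;> simp [qBinomial]
  | succ n ih => cases k <;> simp [qBinomial_succ_succ, ih]

theorem qBinomial_succ_mul (n k : ℕ) :
    qBinomial q n (k + 1) * (1 - q ^ (k + 1)) = qBinomial q n k * (1 - q ^ (n - k)) := by
  induction n generalizing k with
  | zero => cases k <;> simp [qBinomial_of_lt]
  | succ n ih =>
    rcases k with _ | k
    · have h₀ := ih 0
      simp only [qBinomial_succ_succ, qBinomial_zero_right, Nat.sub_zero] at h₀ ⊢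
      linear_combination q * h₀
    rcases lt_or_ge k n with hkn | hnk
    · obtain ⟨c, rfl⟩ := Nat.exists_eq_add_of_lt hkn
      rw [qBinomial_succ_succ q (k + c + 1) (k + 1), qBinomial_succ_succ q (k + c + 1) k]
      have h₀ := ih k
      have h₁ := ih (k + 1)
      rw [show k + c + 1 - k = c + 1 by omega] at h₀
      rw [show k + c + 1 - (k + 1) = c by omega] at h₁
      rw [show k + c + 1 + 1 - (k + 1) = c + 1 by omega]
      linear_combination q ^ (k + 2) * h₁ + h₀
    · rw [qBinomial_of_lt q (by omega : n + 1 < k + 1 + 1), Nat.sub_eq_zero_of_le (by omega)]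
      simp

theorem qBinomial_succ_succ' (n k : ℕ) :
    qBinomial q (n + 1) (k + 1) = qBinomial q n (k + 1) + q ^ (n - k) * qBinomial q n k := by
  rcases lt_or_ge n k with hnk | hkn
  · simp [qBinomial_of_lt q hnk, qBinomial_of_lt q (by omega : n < k + 1),
      qBinomial_of_lt q (by omega : n + 1 < k + 1)]
  have h := qBinomial_succ_mul q n k
  rw [qBinomial_succ_succ]
  linear_combination -h

theorem qFactorial_mul_qBinomial (n k : ℕ) (hk : k ≤ n) :
    qFactorial q k * qBinomial q n k = ∏ i ∈ Icc 1 k, (1 - q ^ (n - i + 1)) := by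
  induction k with
  | zero => simp
  | succ k ih =>
    rw [prod_Icc_succ_top (by omega), ← ih (by omega), qFactorial_succ,
      show n - (k + 1) + 1 = n - k by omega]
    linear_combination qFactorial q k * qBinomial_succ_mul q n k

theorem qFactorial_mul_qBinomial_mul_qFactorial (n k : ℕ) (hk : k ≤ n) :
    qFactorial q k * qBinomial q n k * qFactorial q (n - k) = qFactorial q n := by
  induction k with
  | zero => simp
  | succ k ih =>
    have hfac := qFactorial_succ q (n - (k + 1))
    rw [show n - (k + 1) + 1 = n - k by omega] at hfac
    rw [qFactorial_succ, ← ih (by omega), hfac]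
    linear_combination qFactorial q k * qFactorial q (n - (k + 1)) * qBinomial_succ_mul q n k

def qVandermondeTerm (s m k : ℕ) : R :=
  q ^ ((s - k) * (m - k)) * qBinomial q s k * qBinomial q m k * qFactorial q k

theorem qVandermondeTerm_zero_right (s m : ℕ) : qVandermondeTerm q s m 0 = q ^ (s * m) := by
  simp [qVandermondeTerm]

theorem qVandermondeTerm_of_lt {s m k : ℕ} (hk : min s m < k) :
    qVandermondeTerm q s m k = 0 := by
  rcases min_lt_iff.mp hk with h | h <;> simp [qVandermondeTerm, qBinomial_of_lt q h]

theorem qVandermondeTerm_succ_succ (s m k : ℕ) :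
    qVandermondeTerm q (s + 1) m (k + 1) = qVandermondeTerm q s m k +
      (q ^ (m - (k + 1)) * qVandermondeTerm q s m (k + 1) -
        q ^ (m - k) * qVandermondeTerm q s m k) := by
  rcases le_or_gt m k with hmk | hkm
  · simp [qVandermondeTerm, qBinomial_of_lt q (Nat.lt_succ_of_le hmk), Nat.sub_eq_zero_of_le hmk,
      Nat.sub_eq_zero_of_le (Nat.le_succ_of_le hmk)]
  obtain ⟨c, rfl⟩ := Nat.exists_eq_add_of_lt hkm
  have hm := qBinomial_succ_mul q (k + c + 1) k
  rw [show k + c + 1 - k = c + 1 by omega] at hm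
  simp only [qVandermondeTerm]
  rw [qBinomial_succ_succ' q s k, qFactorial_succ, Nat.add_sub_add_right,
    show k + c + 1 - (k + 1) = c by omega, show k + c + 1 - k = c + 1 by omega]
  rcases le_or_gt s k with hsk | hks
  · rw [qBinomial_of_lt q (Nat.lt_succ_of_le hsk), Nat.sub_eq_zero_of_le hsk]
    linear_combination qBinomial q s k * qFactorial q k * hm
  obtain ⟨d, rfl⟩ := Nat.exists_eq_add_of_lt hks
  rw [show k + d + 1 - (k + 1) = d by omega, show k + d + 1 - k = d + 1 by omega]
  linear_combination q ^ ((d + 1) * (c + 1)) * qBinomial q (k + d + 1) k * qFactorial q k * hm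

theorem sum_qVandermondeTerm (s m : ℕ) :
    ∑ k ∈ range (s + 1), qVandermondeTerm q s m k = 1 := by
  induction s with
  | zero => simp [qVandermondeTerm]
  | succ s ih =>
    rw [sum_range_succ', sum_congr rfl fun k _ => qVandermondeTerm_succ_succ q s m k,
      sum_add_distrib, ih, sum_range_sub (fun k => q ^ (m - k) * qVandermondeTerm q s m k),
      qVandermondeTerm_of_lt q (by omega : min s m < s + 1), qVandermondeTerm_zero_right,
      qVandermondeTerm_zero_right, Nat.sub_zero]
    ring

theorem sum_range_qVandermondeTerm {s m N : ℕ} (hN : min s m < N) :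
    ∑ k ∈ range N, qVandermondeTerm q s m k = 1 := by
  have hcut : ∀ N, min s m < N → ∑ k ∈ range N, qVandermondeTerm q s m k =
      ∑ k ∈ range (min s m + 1), qVandermondeTerm q s m k := fun N hN =>
    (sum_subset (range_subset_range.mpr hN) fun k hk hk' =>
      qVandermondeTerm_of_lt q (by simp only [mem_range] at hk hk'; omega)).symm
  rw [hcut N hN, ← hcut (s + 1) (by omega), sum_qVandermondeTerm]

end CommRing

theorem qFactorial_ne_zero {R : Type*} [CommRing R] [IsDomain R] {q : R}
    (hq : ∀ i, 0 < i → q ^ i ≠ 1) (n : ℕ) : qFactorial q n ≠ 0 :=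
  prod_ne_zero_iff.mpr fun i hi => sub_ne_zero.mpr (hq i (mem_Icc.mp hi).1).symm

theorem qBinomial_eq_div {K : Type*} [Field K] {q : K} (hq : ∀ i, 0 < i → q ^ i ≠ 1)
    {n k : ℕ} (hk : k ≤ n) :
    qBinomial q n k = qFactorial q n / (qFactorial q k * qFactorial q (n - k)) := by
  rw [eq_div_iff (mul_ne_zero (qFactorial_ne_zero hq k) (qFactorial_ne_zero hq (n - k))),
    ← qFactorial_mul_qBinomial_mul_qFactorial q n k hk]
  ring

theorem RatFunc.X_pow_ne_one {K : Type*} [Field K] {i : ℕ} (hi : 0 < i) :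
    (RatFunc.X : RatFunc K) ^ i ≠ 1 := by
  intro h
  rw [← RatFunc.algebraMap_X, ← map_pow, ← map_one (algebraMap K[X] (RatFunc K))] at h
  simpa [hi.ne'] using congrArg natDegree (RatFunc.algebraMap_injective K h)

theorem iQ_X : iQ X = RatFunc.X := by
  simp [iQ]

theorem gb_eq_qBinomial {n k : ℕ} (hk : k ≤ n) : gb n k = qBinomial X n k := by
  have hsign : ∀ f : ℕ → ℕ, ∏ i ∈ Icc 1 k, ((X : ℤ[X]) ^ f i - 1) =
      (-1) ^ k * ∏ i ∈ Icc 1 k, (1 - X ^ f i) := fun f => by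
    simpa using prod_neg (s := Icc 1 k) fun i => 1 - (X : ℤ[X]) ^ f i
  have hmonic : (∏ i ∈ Icc 1 k, ((X : ℤ[X]) ^ i - 1)).Monic :=
    monic_prod_of_monic _ _ fun i hi => by
      simpa using monic_X_pow_sub_C (1 : ℤ) (Nat.one_le_iff_ne_zero.mp (mem_Icc.mp hi).1)
  have hnum : ∏ i ∈ Icc 1 k, ((X : ℤ[X]) ^ (n - i + 1) - 1) =
      (∏ i ∈ Icc 1 k, ((X : ℤ[X]) ^ i - 1)) * qBinomial X n k := by
    rw [hsign, hsign fun i => i, ← qFactorial_mul_qBinomial X n k hk, qFactorial, mul_assoc]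
  rw [gb, if_pos ⟨by positivity, by exact_mod_cast hk⟩, Int.toNat_natCast, hnum,
    mul_divByMonic_cancel_left _ hmonic]

theorem iQ_gb {n k : ℕ} (hk : k ≤ n) : iQ (gb n k) = qBinomial RatFunc.X n k := by
  rw [gb_eq_qBinomial hk, map_qBinomial, iQ_X]

theorem poch_eq_inv_qFactorial (n : ℕ) : poch n = (qFactorial RatFunc.X n)⁻¹ := by
  rw [poch, qFactorial, prod_inv_distrib]

theorem bcoef_mul_qBinomial {s m k : ℕ} (hks : k ≤ s) (hkm : k ≤ m) :
    bcoef (s + m) k * qBinomial RatFunc.X (s + m - 2 * k) (s - k) =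
      RatFunc.X ^ ((s : ℤ) * ((s : ℤ) - (s + m : ℕ))) * qBinomial RatFunc.X (s + m) s *
        qVandermondeTerm RatFunc.X s m k := by
  have hX : ∀ i, 0 < i → (RatFunc.X : RatFunc ℚ) ^ i ≠ 1 := fun i => RatFunc.X_pow_ne_one
  obtain ⟨j, rfl⟩ := Nat.exists_eq_add_of_le hks
  obtain ⟨l, rfl⟩ := Nat.exists_eq_add_of_le hkm
  have hexp : (RatFunc.X : RatFunc ℚ) ^ ((k : ℤ) * ((k : ℤ) - (k + j + (k + l) : ℕ))) =
      RatFunc.X ^ (((k + j : ℕ) : ℤ) * ((k + j : ℕ) - (k + j + (k + l) : ℕ))) *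
        RatFunc.X ^ (j * l) := by
    rw [← zpow_natCast, ← zpow_add₀ RatFunc.X_ne_zero]
    congr 1
    push_cast
    ring
  rw [bcoef, if_pos (by omega), hexp, qVandermondeTerm,
    qBinomial_eq_div hX (by omega), qBinomial_eq_div hX (by omega),
    qBinomial_eq_div hX (by omega), qBinomial_eq_div hX (by omega),
    poch_eq_inv_qFactorial, poch_eq_inv_qFactorial, poch_eq_inv_qFactorial,
    show k + j + (k + l) - 2 * k = j + l by omega, show k + j - k = j by omega,
    show k + l - k = l by omega, show j + l - j = l by omega,
    show k + j + (k + l) - (k + j) = k + l by omega]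
  field_simp [qFactorial_ne_zero hX]

/-- For all integers `λ ≥ 0` and `0 ≤ s ≤ λ`, the identity
`u^{s(s−λ)}·[λ; s] = Σ_{k=0}^{⌊λ/2⌋} b_λ(k)·[λ−2k; s−k]` holds in `ℚ(u)`. -/
theorem stmt_6 (lam s : ℕ) (h : s ≤ lam) :
    RatFunc.X ^ ((s : ℤ) * ((s : ℤ) - lam)) * iQ (gb lam s) =
      ∑ k ∈ Finset.range (lam / 2 + 1),
        bcoef lam k * iQ (gb (lam - 2 * k) ((s : ℤ) - k)) := by
  obtain ⟨m, rfl⟩ := Nat.exists_eq_add_of_le h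
  rw [← mul_one (_ * iQ _), ← sum_range_qVandermondeTerm RatFunc.X (s := s) (m := m)
    (N := (s + m) / 2 + 1) (by omega), mul_sum]
  refine sum_congr rfl fun k hk_mem => ?_
  rw [mem_range] at hk_mem
  by_cases hk : k ≤ s ∧ k ≤ m
  · rw [iQ_gb h, show (s : ℤ) - k = ((s - k : ℕ) : ℤ) by omega, iQ_gb (by omega),
      bcoef_mul_qBinomial hk.1 hk.2]
  · have hgb : gb (s + m - 2 * k) ((s : ℤ) - k) = 0 := if_neg (by omega)
    rw [hgb, map_zero, mul_zero, qVandermondeTerm_of_lt _ (by omega), mul_zero]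
end
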